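/- The negation-right rule is admissible in cut-free lTS4: if the sequent α, Γ ⊢ Δ is provable in cut-free lTS4, then Γ ⊢ Δ, ¬α is provable in cut-free lTS4. -/

import Mathlib

inductive Fml : Type
  | var : ℕ → Fml
  | and : Fml → Fml → Fml
  | or  : Fml → Fml → Fml
  | imp : Fml → Fml → Fml
  | neg : Fml → Fml
  | box : Fml → Fml
  | dia : Fml → Fml
  deriving DecidableEq

open Fml

abbrev Ctx := Finset Fml

/-- □Γ -/
def boxS (Γ : Ctx) : Ctx := Γ.image Fml.box
/-- ◇Γ -/
def diaS (Γ : Ctx) : Ctx := Γ.image Fml.dia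
/-- ¬□Γ -/
def nboxS (Γ : Ctx) : Ctx := Γ.image (fun g => Fml.neg (Fml.box g))
/-- ¬◇Γ -/
def ndiaS (Γ : Ctx) : Ctx := Γ.image (fun g => Fml.neg (Fml.dia g))

/-- The twist sequent calculus lTS4; the Boolean index is `true` iff the cut rule is allowed.
    `lTS4 false` is the cut-free fragment. -/
inductive lTS4 : Bool → Ctx → Ctx → Prop
  | initV (c : Bool) (p : ℕ) : lTS4 c {var p} {var p}
  | initNV (c : Bool) (p : ℕ) : lTS4 c {neg (var p)} {neg (var p)}
  | initL (c : Bool) (p : ℕ) : lTS4 c {neg (var p), var p} ∅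
  | initR (c : Bool) (p : ℕ) : lTS4 c ∅ {neg (var p), var p}
  | cut (Γ Δ : Ctx) (α : Fml) :
      lTS4 true Γ {α} → lTS4 true (insert α Γ) Δ → lTS4 true Γ Δ
  | weL (c Γ Δ α) : lTS4 c Γ Δ → lTS4 c (insert α Γ) Δ
  | weR (c Γ Δ α) : lTS4 c Γ Δ → lTS4 c Γ (insert α Δ)
  | andL (c Γ Δ α β) : lTS4 c (insert α (insert β Γ)) Δ → lTS4 c (insert (α.and β) Γ) Δ
  | andR (c Γ Δ α β) : lTS4 c Γ (insert α Δ) → lTS4 c Γ (insert β Δ) →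
      lTS4 c Γ (insert (α.and β) Δ)
  | orL (c Γ Δ α β) : lTS4 c (insert α Γ) Δ → lTS4 c (insert β Γ) Δ →
      lTS4 c (insert (α.or β) Γ) Δ
  | orR (c Γ Δ α β) : lTS4 c Γ (insert α (insert β Δ)) → lTS4 c Γ (insert (α.or β) Δ)
  | impL (c Γ Δ α β) : lTS4 c Γ (insert α Δ) → lTS4 c (insert β Γ) Δ →
      lTS4 c (insert (α.imp β) Γ) Δ
  | impR (c Γ Δ α β) : lTS4 c (insert α Γ) (insert β Δ) → lTS4 c Γ (insert (α.imp β) Δ)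
  | boxL (c Γ Δ α) : lTS4 c (insert α Γ) Δ → lTS4 c (insert α.box Γ) Δ
  | boxR (c Γ₁ Γ₂ Δ₁ Δ₂ α) :
      lTS4 c (boxS Γ₁ ∪ ndiaS Γ₂) (insert α (diaS Δ₁ ∪ nboxS Δ₂)) →
      lTS4 c (boxS Γ₁ ∪ ndiaS Γ₂) (insert α.box (diaS Δ₁ ∪ nboxS Δ₂))
  | diaL (c Γ₁ Γ₂ Δ₁ Δ₂ α) :
      lTS4 c (insert α (boxS Γ₁ ∪ ndiaS Γ₂)) (diaS Δ₁ ∪ nboxS Δ₂) →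
      lTS4 c (insert α.dia (boxS Γ₁ ∪ ndiaS Γ₂)) (diaS Δ₁ ∪ nboxS Δ₂)
  | diaR (c Γ Δ α) : lTS4 c Γ (insert α Δ) → lTS4 c Γ (insert α.dia Δ)
  | nnL (c Γ Δ α) : lTS4 c (insert α Γ) Δ → lTS4 c (insert α.neg.neg Γ) Δ
  | nnR (c Γ Δ α) : lTS4 c Γ (insert α Δ) → lTS4 c Γ (insert α.neg.neg Δ)
  | nandL (c Γ Δ α β) : lTS4 c Γ (insert α Δ) → lTS4 c Γ (insert β Δ) →
      lTS4 c (insert (α.and β).neg Γ) Δ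
  | nandR (c Γ Δ α β) : lTS4 c (insert α (insert β Γ)) Δ → lTS4 c Γ (insert (α.and β).neg Δ)
  | norL (c Γ Δ α β) : lTS4 c Γ (insert α (insert β Δ)) → lTS4 c (insert (α.or β).neg Γ) Δ
  | norR (c Γ Δ α β) : lTS4 c (insert α Γ) Δ → lTS4 c (insert β Γ) Δ →
      lTS4 c Γ (insert (α.or β).neg Δ)
  | nimpL (c Γ Δ α β) : lTS4 c (insert α Γ) (insert β Δ) → lTS4 c (insert (α.imp β).neg Γ) Δ
  | nimpR (c Γ Δ α β) : lTS4 c Γ (insert α Δ) → lTS4 c (insert β Γ) Δ →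
      lTS4 c Γ (insert (α.imp β).neg Δ)
  | nboxL (c Γ₁ Γ₂ Δ₁ Δ₂ α) :
      lTS4 c (boxS Γ₁ ∪ ndiaS Γ₂) (insert α (diaS Δ₁ ∪ nboxS Δ₂)) →
      lTS4 c (insert α.box.neg (boxS Γ₁ ∪ ndiaS Γ₂)) (diaS Δ₁ ∪ nboxS Δ₂)
  | nboxR (c Γ Δ α) : lTS4 c (insert α Γ) Δ → lTS4 c Γ (insert α.box.neg Δ)
  | ndiaL (c Γ Δ α) : lTS4 c Γ (insert α Δ) → lTS4 c (insert α.dia.neg Γ) Δ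
  | ndiaR (c Γ₁ Γ₂ Δ₁ Δ₂ α) :
      lTS4 c (insert α (boxS Γ₁ ∪ ndiaS Γ₂)) (diaS Δ₁ ∪ nboxS Δ₂) →
      lTS4 c (boxS Γ₁ ∪ ndiaS Γ₂) (insert α.dia.neg (diaS Δ₁ ∪ nboxS Δ₂))

/-!
Induction on cut-free derivations, for the stronger claim that any part `S` of the antecedent
can be moved into the succedent at once, each formula being flipped (`¬φ` becomes `φ`, any other
`φ` becomes `¬φ`). Sets rather than single formulas are needed because contraction is implicit,
so a principal formula may survive in the context of a premise. When the principal formula `φ`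
of a left rule is moved, the twist rule introducing `φ.flip` on the right applies to the same
premises (∧left gives ¬∧right, ¬∧left gives ∧right, ...); for ¬¬left it is the claim for the
premise, with `α` added to `S`. The context restrictions of the modal rules survive because
flipping `□Γ₁, ¬◇Γ₂` gives `¬□Γ₁, ◇Γ₂`.
-/

def Fml.flip : Fml → Fml
  | neg φ => φ
  | φ => neg φ

theorem Finset.insert_sdiff_subset_insert {ι : Type*} [DecidableEq ι] (a : ι) (s t : Finset ι) :
    insert a s \ t ⊆ insert a (s \ t) := by
  intro x
  simp only [mem_sdiff, mem_insert]
  tauto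

open Finset

section

variable {c : Bool} {Γ Δ Γ' Δ' M R : Ctx} {φ α β : Fml}

namespace lTS4

theorem weaken_union_left (h : lTS4 c Γ Δ) (T : Ctx) : lTS4 c (Γ ∪ T) Δ := by
  induction T using Finset.induction_on with
  | empty => simpa using h
  | insert a T _ ih => rw [union_insert]; exact .weL _ _ _ _ ih

theorem weaken_union_right (h : lTS4 c Γ Δ) (T : Ctx) : lTS4 c Γ (Δ ∪ T) := by
  induction T using Finset.induction_on with
  | empty => simpa using h
  | insert a T _ ih => rw [union_insert]; exact .weR _ _ _ _ ih

theorem weaken (h : lTS4 c Γ Δ) (hΓ : Γ ⊆ Γ') (hΔ : Δ ⊆ Δ') : lTS4 c Γ' Δ' := by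
  simpa [union_eq_right.2 hΓ, union_eq_right.2 hΔ] using
    (h.weaken_union_left Γ').weaken_union_right Δ'

theorem of_atom {p : ℕ} (hp : var p ∈ Γ ∨ neg (var p) ∈ Δ)
    (hnp : neg (var p) ∈ Γ ∨ var p ∈ Δ) : lTS4 c Γ Δ := by
  rcases hp with hp | hp <;> rcases hnp with hnp | hnp
  · exact (initL c p).weaken (by simp [insert_subset_iff, hp, hnp]) (empty_subset _)
  · exact (initV c p).weaken (singleton_subset_iff.2 hp) (singleton_subset_iff.2 hnp)
  · exact (initNV c p).weaken (singleton_subset_iff.2 hnp) (singleton_subset_iff.2 hp)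
  · exact (initR c p).weaken (empty_subset _) (by simp [insert_subset_iff, hp, hnp])

theorem negR_of_flip (h : lTS4 c Γ (insert φ.flip Δ)) : lTS4 c Γ (insert φ.neg Δ) := by
  cases φ with
  | neg ψ => exact .nnR _ _ _ _ h
  | _ => exact h

end lTS4

def IsBoxCtx (Γ : Ctx) : Prop := ∃ Γ₁ Γ₂, Γ = boxS Γ₁ ∪ ndiaS Γ₂

def IsDiaCtx (Δ : Ctx) : Prop := ∃ Δ₁ Δ₂, Δ = diaS Δ₁ ∪ nboxS Δ₂

theorem IsBoxCtx.mono (h : IsBoxCtx Γ) (hΓ' : Γ' ⊆ Γ) : IsBoxCtx Γ' := by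
  obtain ⟨Γ₁, Γ₂, rfl⟩ := h
  refine ⟨Γ₁.filter (box · ∈ Γ'), Γ₂.filter (fun g => neg (dia g) ∈ Γ'), ?_⟩
  ext φ
  have := @hΓ' φ
  simp only [boxS, ndiaS, mem_union, mem_image, mem_filter] at this ⊢
  grind

theorem IsBoxCtx.image_flip (h : IsBoxCtx Γ) : IsDiaCtx (Γ.image Fml.flip) := by
  obtain ⟨Γ₁, Γ₂, rfl⟩ := h
  exact ⟨Γ₂, Γ₁, by simp [boxS, ndiaS, diaS, nboxS, image_union, image_image, Function.comp_def,
    Fml.flip, union_comm]⟩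

theorem IsBoxCtx.dia_notMem (h : IsBoxCtx Γ) : α.dia ∉ Γ := by
  obtain ⟨Γ₁, Γ₂, rfl⟩ := h
  simp [boxS, ndiaS]

theorem IsBoxCtx.neg_box_notMem (h : IsBoxCtx Γ) : α.box.neg ∉ Γ := by
  obtain ⟨Γ₁, Γ₂, rfl⟩ := h
  simp [boxS, ndiaS]

theorem IsDiaCtx.union (h : IsDiaCtx Δ) (h' : IsDiaCtx Δ') : IsDiaCtx (Δ ∪ Δ') := by
  obtain ⟨Δ₁, Δ₂, rfl⟩ := h
  obtain ⟨Δ₁', Δ₂', rfl⟩ := h'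
  refine ⟨Δ₁ ∪ Δ₁', Δ₂ ∪ Δ₂', ?_⟩
  simp only [diaS, nboxS, image_union]
  ac_rfl

namespace lTS4

theorem boxR' (hΓ : IsBoxCtx Γ) (hΔ : IsDiaCtx Δ) (h : lTS4 c Γ (insert α Δ)) :
    lTS4 c Γ (insert α.box Δ) := by
  obtain ⟨Γ₁, Γ₂, rfl⟩ := hΓ
  obtain ⟨Δ₁, Δ₂, rfl⟩ := hΔ
  exact .boxR _ _ _ _ _ _ h

theorem diaL' (hΓ : IsBoxCtx Γ) (hΔ : IsDiaCtx Δ) (h : lTS4 c (insert α Γ) Δ) :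
    lTS4 c (insert α.dia Γ) Δ := by
  obtain ⟨Γ₁, Γ₂, rfl⟩ := hΓ
  obtain ⟨Δ₁, Δ₂, rfl⟩ := hΔ
  exact .diaL _ _ _ _ _ _ h

theorem nboxL' (hΓ : IsBoxCtx Γ) (hΔ : IsDiaCtx Δ) (h : lTS4 c Γ (insert α Δ)) :
    lTS4 c (insert α.box.neg Γ) Δ := by
  obtain ⟨Γ₁, Γ₂, rfl⟩ := hΓ
  obtain ⟨Δ₁, Δ₂, rfl⟩ := hΔ
  exact .nboxL _ _ _ _ _ _ h

theorem ndiaR' (hΓ : IsBoxCtx Γ) (hΔ : IsDiaCtx Δ) (h : lTS4 c (insert α Γ) Δ) :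
    lTS4 c Γ (insert α.dia.neg Δ) := by
  obtain ⟨Γ₁, Γ₂, rfl⟩ := hΓ
  obtain ⟨Δ₁, Δ₂, rfl⟩ := hΔ
  exact .ndiaR _ _ _ _ _ _ h

end lTS4

def Flippable (Γ Δ : Ctx) : Prop :=
  ∀ S ⊆ Γ, lTS4 false (Γ \ S) (Δ ∪ S.image Fml.flip)

namespace Flippable

theorem shift (h : Flippable Γ Δ) (S : Ctx) : lTS4 false (Γ \ S) (Δ ∪ S.image Fml.flip) :=
  (h (S ∩ Γ) inter_subset_right).weaken (sdiff_inter_self_right Γ S).le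
    (union_subset_union_right (image_subset_image inter_subset_left))

theorem shiftL (h : Flippable (insert α Γ) Δ) (S : Ctx) :
    lTS4 false (insert α (Γ \ S)) (Δ ∪ S.image Fml.flip) :=
  (h.shift S).weaken (insert_sdiff_subset_insert α Γ S) subset_rfl

theorem shiftL₂ (h : Flippable (insert α (insert β Γ)) Δ) (S : Ctx) :
    lTS4 false (insert α (insert β (Γ \ S))) (Δ ∪ S.image Fml.flip) :=
  (h.shift S).weaken ((insert_sdiff_subset_insert α _ S).trans
    (insert_subset_insert α (insert_sdiff_subset_insert β Γ S))) subset_rfl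

theorem shiftR (h : Flippable Γ (insert α Δ)) (S : Ctx) :
    lTS4 false (Γ \ S) (insert α (Δ ∪ S.image Fml.flip)) :=
  insert_union α Δ _ ▸ h.shift S

theorem shiftR₂ (h : Flippable Γ (insert α (insert β Δ))) (S : Ctx) :
    lTS4 false (Γ \ S) (insert α (insert β (Δ ∪ S.image Fml.flip))) :=
  insert_union β Δ _ ▸ h.shiftR S

theorem shiftLR (h : Flippable (insert α Γ) (insert β Δ)) (S : Ctx) :
    lTS4 false (insert α (Γ \ S)) (insert β (Δ ∪ S.image Fml.flip)) :=
  insert_union β Δ _ ▸ h.shiftL S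

theorem negR (h : Flippable (insert α Γ) Δ) (S : Ctx) :
    lTS4 false (Γ \ S) (insert α.neg (Δ ∪ S.image Fml.flip)) := by
  have := h.shift (insert α S)
  rw [insert_sdiff_insert, image_insert, union_insert] at this
  exact lTS4.negR_of_flip
    (this.weaken (sdiff_subset_sdiff subset_rfl (subset_insert α S)) subset_rfl)

theorem of_atom {p : ℕ} (hp : var p ∈ Γ ∨ neg (var p) ∈ Δ)
    (hnp : neg (var p) ∈ Γ ∨ var p ∈ Δ) : Flippable Γ Δ := by
  intro S _
  apply lTS4.of_atom (p := p) <;> simp only [mem_sdiff, mem_union, mem_image]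
  · by_cases hS : var p ∈ S
    · exact .inr (.inr ⟨_, hS, rfl⟩)
    · exact hp.imp (⟨·, hS⟩) .inl
  · by_cases hS : neg (var p) ∈ S
    · exact .inr (.inr ⟨_, hS, rfl⟩)
    · exact hnp.imp (⟨·, hS⟩) .inl

theorem of_insert_right
    (h : ∀ S ⊆ Γ, lTS4 false (Γ \ S) (insert φ (Δ ∪ S.image Fml.flip))) :
    Flippable Γ (insert φ Δ) :=
  fun S hS => insert_union φ Δ _ ▸ h S hS

theorem of_insert_left
    (hflip : ∀ S, lTS4 false (Γ \ S) (insert φ.flip (Δ ∪ S.image Fml.flip)))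
    (hkeep : ∀ S, lTS4 false (insert φ (Γ \ S)) (Δ ∪ S.image Fml.flip)) :
    Flippable (insert φ Γ) Δ := by
  intro S _
  by_cases hφ : φ ∈ S
  · rw [insert_sdiff_of_mem _ hφ, ← insert_eq_of_mem (mem_union_right Δ (mem_image_of_mem _ hφ))]
    exact hflip S
  · rw [insert_sdiff_of_notMem _ hφ]
    exact hkeep S

-- `φ` is kept out of the `S` given to `hflip`, so that the flipped part of a modal context is
-- again a modal context.
theorem of_insert_left_of_notMem (hφ : φ ∉ M)
    (hflip : ∀ S ⊆ M, lTS4 false (M \ S) (insert φ.flip (Δ ∪ S.image Fml.flip)))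
    (hkeep : ∀ S ⊆ M, lTS4 false (insert φ (M \ S)) (Δ ∪ S.image Fml.flip)) :
    Flippable (insert φ M) Δ := by
  intro S hS
  by_cases hφS : φ ∈ S
  · rw [← insert_erase hφS, insert_sdiff_insert, sdiff_insert_of_notMem hφ, image_insert,
      union_insert]
    exact hflip _ (subset_insert_iff.1 hS)
  · rw [insert_sdiff_of_notMem _ hφS]
    exact hkeep S ((subset_insert_iff_of_notMem hφS).1 hS)

theorem weL (h : Flippable Γ Δ) : Flippable (insert α Γ) Δ :=
  of_insert_left (fun S => .weR _ _ _ _ (h.shift S)) (fun S => .weL _ _ _ _ (h.shift S))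

theorem weR (h : Flippable Γ Δ) : Flippable Γ (insert α Δ) :=
  of_insert_right fun S _ => .weR _ _ _ _ (h.shift S)

theorem andL (h : Flippable (insert α (insert β Γ)) Δ) : Flippable (insert (α.and β) Γ) Δ :=
  of_insert_left (fun S => .nandR _ _ _ _ _ (h.shiftL₂ S)) (fun S => .andL _ _ _ _ _ (h.shiftL₂ S))

theorem andR (h₁ : Flippable Γ (insert α Δ)) (h₂ : Flippable Γ (insert β Δ)) :
    Flippable Γ (insert (α.and β) Δ) :=
  of_insert_right fun S _ => .andR _ _ _ _ _ (h₁.shiftR S) (h₂.shiftR S)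

theorem orL (h₁ : Flippable (insert α Γ) Δ) (h₂ : Flippable (insert β Γ) Δ) :
    Flippable (insert (α.or β) Γ) Δ :=
  of_insert_left (fun S => .norR _ _ _ _ _ (h₁.shiftL S) (h₂.shiftL S))
    (fun S => .orL _ _ _ _ _ (h₁.shiftL S) (h₂.shiftL S))

theorem orR (h : Flippable Γ (insert α (insert β Δ))) : Flippable Γ (insert (α.or β) Δ) :=
  of_insert_right fun S _ => .orR _ _ _ _ _ (h.shiftR₂ S)

theorem impL (h₁ : Flippable Γ (insert α Δ)) (h₂ : Flippable (insert β Γ) Δ) :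
    Flippable (insert (α.imp β) Γ) Δ :=
  of_insert_left (fun S => .nimpR _ _ _ _ _ (h₁.shiftR S) (h₂.shiftL S))
    (fun S => .impL _ _ _ _ _ (h₁.shiftR S) (h₂.shiftL S))

theorem impR (h : Flippable (insert α Γ) (insert β Δ)) : Flippable Γ (insert (α.imp β) Δ) :=
  of_insert_right fun S _ => .impR _ _ _ _ _ (h.shiftLR S)

theorem boxL (h : Flippable (insert α Γ) Δ) : Flippable (insert α.box Γ) Δ :=
  of_insert_left (fun S => .nboxR _ _ _ _ (h.shiftL S)) (fun S => .boxL _ _ _ _ (h.shiftL S))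

theorem boxR (hM : IsBoxCtx M) (hR : IsDiaCtx R) (h : Flippable M (insert α R)) :
    Flippable M (insert α.box R) :=
  of_insert_right fun S hS =>
    (h.shiftR S).boxR' (hM.mono sdiff_subset) (hR.union (hM.mono hS).image_flip)

theorem diaL (hM : IsBoxCtx M) (hR : IsDiaCtx R) (h : Flippable (insert α M) R) :
    Flippable (insert α.dia M) R :=
  of_insert_left_of_notMem hM.dia_notMem
    (fun S hS => (h.shiftL S).ndiaR' (hM.mono sdiff_subset) (hR.union (hM.mono hS).image_flip))
    (fun S hS => (h.shiftL S).diaL' (hM.mono sdiff_subset) (hR.union (hM.mono hS).image_flip))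

theorem diaR (h : Flippable Γ (insert α Δ)) : Flippable Γ (insert α.dia Δ) :=
  of_insert_right fun S _ => .diaR _ _ _ _ (h.shiftR S)

theorem nnL (h : Flippable (insert α Γ) Δ) : Flippable (insert α.neg.neg Γ) Δ :=
  of_insert_left h.negR (fun S => .nnL _ _ _ _ (h.shiftL S))

theorem nnR (h : Flippable Γ (insert α Δ)) : Flippable Γ (insert α.neg.neg Δ) :=
  of_insert_right fun S _ => .nnR _ _ _ _ (h.shiftR S)

theorem nandL (h₁ : Flippable Γ (insert α Δ)) (h₂ : Flippable Γ (insert β Δ)) :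
    Flippable (insert (α.and β).neg Γ) Δ :=
  of_insert_left (fun S => .andR _ _ _ _ _ (h₁.shiftR S) (h₂.shiftR S))
    (fun S => .nandL _ _ _ _ _ (h₁.shiftR S) (h₂.shiftR S))

theorem nandR (h : Flippable (insert α (insert β Γ)) Δ) : Flippable Γ (insert (α.and β).neg Δ) :=
  of_insert_right fun S _ => .nandR _ _ _ _ _ (h.shiftL₂ S)

theorem norL (h : Flippable Γ (insert α (insert β Δ))) : Flippable (insert (α.or β).neg Γ) Δ :=
  of_insert_left (fun S => .orR _ _ _ _ _ (h.shiftR₂ S)) (fun S => .norL _ _ _ _ _ (h.shiftR₂ S))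

theorem norR (h₁ : Flippable (insert α Γ) Δ) (h₂ : Flippable (insert β Γ) Δ) :
    Flippable Γ (insert (α.or β).neg Δ) :=
  of_insert_right fun S _ => .norR _ _ _ _ _ (h₁.shiftL S) (h₂.shiftL S)

theorem nimpL (h : Flippable (insert α Γ) (insert β Δ)) : Flippable (insert (α.imp β).neg Γ) Δ :=
  of_insert_left (fun S => .impR _ _ _ _ _ (h.shiftLR S)) (fun S => .nimpL _ _ _ _ _ (h.shiftLR S))

theorem nimpR (h₁ : Flippable Γ (insert α Δ)) (h₂ : Flippable (insert β Γ) Δ) :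
    Flippable Γ (insert (α.imp β).neg Δ) :=
  of_insert_right fun S _ => .nimpR _ _ _ _ _ (h₁.shiftR S) (h₂.shiftL S)

theorem nboxL (hM : IsBoxCtx M) (hR : IsDiaCtx R) (h : Flippable M (insert α R)) :
    Flippable (insert α.box.neg M) R :=
  of_insert_left_of_notMem hM.neg_box_notMem
    (fun S hS => (h.shiftR S).boxR' (hM.mono sdiff_subset) (hR.union (hM.mono hS).image_flip))
    (fun S hS => (h.shiftR S).nboxL' (hM.mono sdiff_subset) (hR.union (hM.mono hS).image_flip))

theorem nboxR (h : Flippable (insert α Γ) Δ) : Flippable Γ (insert α.box.neg Δ) :=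
  of_insert_right fun S _ => .nboxR _ _ _ _ (h.shiftL S)

theorem ndiaL (h : Flippable Γ (insert α Δ)) : Flippable (insert α.dia.neg Γ) Δ :=
  of_insert_left (fun S => .diaR _ _ _ _ (h.shiftR S)) (fun S => .ndiaL _ _ _ _ (h.shiftR S))

theorem ndiaR (hM : IsBoxCtx M) (hR : IsDiaCtx R) (h : Flippable (insert α M) R) :
    Flippable M (insert α.dia.neg R) :=
  of_insert_right fun S hS =>
    (h.shiftL S).ndiaR' (hM.mono sdiff_subset) (hR.union (hM.mono hS).image_flip)

end Flippable

theorem flippable_of_cutFree (h : lTS4 c Γ Δ) (hc : c = false) : Flippable Γ Δ := by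
  induction h with
  | cut => cases hc
  | initV _ p | initNV _ p | initL _ p | initR _ p => exact .of_atom (p := p) (by simp) (by simp)
  | weL _ _ _ _ _ ih => exact (ih hc).weL
  | weR _ _ _ _ _ ih => exact (ih hc).weR
  | andL _ _ _ _ _ _ ih => exact (ih hc).andL
  | andR _ _ _ _ _ _ _ ih₁ ih₂ => exact (ih₁ hc).andR (ih₂ hc)
  | orL _ _ _ _ _ _ _ ih₁ ih₂ => exact (ih₁ hc).orL (ih₂ hc)
  | orR _ _ _ _ _ _ ih => exact (ih hc).orR
  | impL _ _ _ _ _ _ _ ih₁ ih₂ => exact (ih₁ hc).impL (ih₂ hc)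
  | impR _ _ _ _ _ _ ih => exact (ih hc).impR
  | boxL _ _ _ _ _ ih => exact (ih hc).boxL
  | boxR _ Γ₁ Γ₂ Δ₁ Δ₂ _ _ ih => exact (ih hc).boxR ⟨Γ₁, Γ₂, rfl⟩ ⟨Δ₁, Δ₂, rfl⟩
  | diaL _ Γ₁ Γ₂ Δ₁ Δ₂ _ _ ih => exact (ih hc).diaL ⟨Γ₁, Γ₂, rfl⟩ ⟨Δ₁, Δ₂, rfl⟩
  | diaR _ _ _ _ _ ih => exact (ih hc).diaR
  | nnL _ _ _ _ _ ih => exact (ih hc).nnL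
  | nnR _ _ _ _ _ ih => exact (ih hc).nnR
  | nandL _ _ _ _ _ _ _ ih₁ ih₂ => exact (ih₁ hc).nandL (ih₂ hc)
  | nandR _ _ _ _ _ _ ih => exact (ih hc).nandR
  | norL _ _ _ _ _ _ ih => exact (ih hc).norL
  | norR _ _ _ _ _ _ _ ih₁ ih₂ => exact (ih₁ hc).norR (ih₂ hc)
  | nimpL _ _ _ _ _ _ ih => exact (ih hc).nimpL
  | nimpR _ _ _ _ _ _ _ ih₁ ih₂ => exact (ih₁ hc).nimpR (ih₂ hc)
  | nboxL _ Γ₁ Γ₂ Δ₁ Δ₂ _ _ ih => exact (ih hc).nboxL ⟨Γ₁, Γ₂, rfl⟩ ⟨Δ₁, Δ₂, rfl⟩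
  | nboxR _ _ _ _ _ ih => exact (ih hc).nboxR
  | ndiaL _ _ _ _ _ ih => exact (ih hc).ndiaL
  | ndiaR _ Γ₁ Γ₂ Δ₁ Δ₂ _ _ ih => exact (ih hc).ndiaR ⟨Γ₁, Γ₂, rfl⟩ ⟨Δ₁, Δ₂, rfl⟩

end

/-- (¬right) is admissible in cut-free lTS4. -/
theorem stmt4 (Γ Δ : Ctx) (α : Fml) (h : lTS4 false (insert α Γ) Δ) :
    lTS4 false Γ (insert α.neg Δ) := by
  simpa using (flippable_of_cutFree h rfl).negR ∅
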